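/- Let s > 0, let D ⊆ ℝ² be a bounded set containing at least N ≥ 1 points of the square lattice L_s = {(s·(p + 1/2), s·(q + 1/2)) : p, q ∈ ℤ}, and suppose there exist L ≥ 0 and a map γ : ℝ → ℝ² that is 1-Lipschitz on [0, L] with frontier(D) ⊆ γ '' [0, L]. Then L ≥ s·(√N − 1). -/

import Mathlib

open MeasureTheory Metric Set ENNReal

noncomputable section

/-- The plane `ℝ²` with the Euclidean metric. -/
abbrev Plane := EuclideanSpace ℝ (Fin 2)

/-- The square lattice of spacing `s`, offset by half a spacing in each coordinate:
`L_s = {(s(p + 1/2), s(q + 1/2)) : p, q ∈ ℤ}`. -/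
def latticePts (s : ℝ) : Set Plane :=
  {x | ∃ p q : ℤ, x 0 = s * ((p : ℝ) + 1 / 2) ∧ x 1 = s * ((q : ℝ) + 1 / 2)}

/-!
Any two lattice points `a, b ∈ D` are at distance at most `L`: the rays from `a` away from `b`
and from `b` away from `a` leave the bounded set `D`, so they cross `frontier D` at two points at
least `dist a b` apart, and any two points of `γ '' [0, L]` are at most `L` apart. Lattice points
at mutual distance at most `L` have index differences at most `m = ⌊L / s⌋₊` in each coordinate,
so there are at most `(m + 1)²` of them, whence `√N ≤ m + 1 ≤ L / s + 1`.
-/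

theorem IsPreconnected.inter_frontier_nonempty {X : Type*} [TopologicalSpace X] {s t : Set X}
    (hs : IsPreconnected s) (hst : (s ∩ t).Nonempty) (hst' : (s \ t).Nonempty) :
    (s ∩ frontier t).Nonempty := by
  have := isPreconnected_iff_preconnectedSpace.1 hs
  obtain ⟨y, hys, hyt⟩ := hst
  obtain ⟨z, hzs, hzt⟩ := hst'
  have hne : (((↑) : s → X) ⁻¹' t).Nonempty := ⟨⟨y, hys⟩, hyt⟩
  have hne' : ((↑) : s → X) ⁻¹' t ≠ univ := fun h => hzt (h.symm ▸ mem_univ (⟨z, hzs⟩ : s) :)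
  obtain ⟨x, hx⟩ := nonempty_frontier_iff.2 ⟨hne, hne'⟩
  exact ⟨x, x.2, continuous_subtype_val.frontier_preimage_subset t hx⟩

section NormedSpace

variable {E : Type*} [NormedAddCommGroup E] [NormedSpace ℝ E] {D : Set E}

theorem Bornology.IsBounded.exists_add_smul_mem_frontier (hD : Bornology.IsBounded D) {a : E}
    (ha : a ∈ D) {v : E} (hv : v ≠ 0) : ∃ t : ℝ, 0 ≤ t ∧ a + t • v ∈ frontier D := by
  obtain ⟨R, hR⟩ := hD.subset_closedBall a
  have hv' : 0 < ‖v‖ := norm_pos_iff.2 hv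
  set T := (|R| + 1) / ‖v‖
  have hT : 0 ≤ T := by positivity
  have hout : a + T • v ∉ D := fun h => by
    have := mem_closedBall.1 (hR h)
    rw [dist_eq_norm, add_sub_cancel_left, norm_smul, Real.norm_of_nonneg hT,
      div_mul_cancel₀ _ hv'.ne'] at this
    linarith [le_abs_self R]
  have hray : IsPreconnected ((fun t : ℝ => a + t • v) '' Ici 0) :=
    isPreconnected_Ici.image _ (by fun_prop)
  obtain ⟨-, ⟨t, ht, rfl⟩, hfr⟩ := hray.inter_frontier_nonempty
    ⟨a, ⟨0, self_mem_Ici, by simp⟩, ha⟩ ⟨_, ⟨T, hT, rfl⟩, hout⟩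
  exact ⟨t, ht, hfr⟩

theorem Bornology.IsBounded.exists_dist_le_dist_frontier [Nontrivial E]
    (hD : Bornology.IsBounded D) {a b : E} (ha : a ∈ D) (hb : b ∈ D) :
    ∃ p ∈ frontier D, ∃ q ∈ frontier D, dist a b ≤ dist p q := by
  rcases eq_or_ne a b with rfl | hab
  · obtain ⟨p, hp⟩ := nonempty_frontier_iff.2
      ⟨⟨a, ha⟩, fun h => NormedSpace.unbounded_univ ℝ E (h ▸ hD)⟩
    exact ⟨p, hp, p, hp, by simp⟩
  obtain ⟨t, ht, hp⟩ := hD.exists_add_smul_mem_frontier ha (sub_ne_zero.2 hab)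
  obtain ⟨u, hu, hq⟩ := hD.exists_add_smul_mem_frontier hb (sub_ne_zero.2 hab.symm)
  refine ⟨_, hp, _, hq, ?_⟩
  have hpq : a + t • (a - b) - (b + u • (b - a)) = (1 + t + u) • (a - b) := by module
  rw [dist_eq_norm, dist_eq_norm, hpq, norm_smul, Real.norm_of_nonneg (by positivity)]
  exact le_mul_of_one_le_left (norm_nonneg _) (by linarith)

end NormedSpace

theorem LipschitzOnWith.dist_le_of_mem_image_Icc {X : Type*} [PseudoMetricSpace X] {K : NNReal}
    {f : ℝ → X} {a b : ℝ} (hf : LipschitzOnWith K f (Icc a b)) {x y : X}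
    (hx : x ∈ f '' Icc a b) (hy : y ∈ f '' Icc a b) : dist x y ≤ K * (b - a) := by
  obtain ⟨t, ht, rfl⟩ := hx
  obtain ⟨u, hu, rfl⟩ := hy
  exact (hf.dist_le_mul t ht u hu).trans
    (mul_le_mul_of_nonneg_left (Real.dist_le_of_mem_Icc ht hu) K.2)

/-- The integer coordinates `(p, q)` of a point of `latticePts s`. -/
def latticeIndex (s : ℝ) (x : Plane) : Fin 2 → ℤ := fun i => ⌊x i / s⌋

theorem eq_latticeIndex {s : ℝ} (hs : 0 < s) {x : Plane} (hx : x ∈ latticePts s) (i : Fin 2) :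
    x i = s * (latticeIndex s x i + 1 / 2) := by
  have key : ∀ p : ℤ, x i = s * (p + 1 / 2) → x i = s * (⌊x i / s⌋ + 1 / 2) := by
    rintro p hp
    have hfloor : ⌊x i / s⌋ = p := by
      rw [Int.floor_eq_iff, hp, mul_div_cancel_left₀ _ hs.ne']
      constructor <;> linarith
    rw [hfloor, hp]
  obtain ⟨p, q, hp, hq⟩ := hx
  fin_cases i
  exacts [key p hp, key q hq]

theorem abs_sub_latticeIndex_lt {s L : ℝ} (hs : 0 < s) {x y : Plane} (hx : x ∈ latticePts s)
    (hy : y ∈ latticePts s) (hxy : dist x y ≤ L) (i : Fin 2) :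
    |latticeIndex s x i - latticeIndex s y i| < (⌊L / s⌋₊ + 1 : ℕ) := by
  have hcoord : s * |(latticeIndex s x i - latticeIndex s y i : ℝ)| ≤ L :=
    calc s * |(latticeIndex s x i - latticeIndex s y i : ℝ)| = dist (x i) (y i) := by
          rw [Real.dist_eq, eq_latticeIndex hs hx, eq_latticeIndex hs hy, ← mul_sub,
            add_sub_add_right_eq_sub, abs_mul, abs_of_pos hs]
      _ ≤ dist x y := PiLp.dist_apply_le x y i
      _ ≤ L := hxy
  have : |(latticeIndex s x i - latticeIndex s y i : ℝ)| < ⌊L / s⌋₊ + 1 :=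
    ((le_div_iff₀' hs).2 hcoord).trans_lt (Nat.lt_floor_add_one _)
  exact_mod_cast this

theorem ncard_le_of_subset_latticePts {s L : ℝ} (hs : 0 < s) {S : Set Plane}
    (hS : S ⊆ latticePts s) (hdist : ∀ x ∈ S, ∀ y ∈ S, dist x y ≤ L) :
    S.ncard ≤ (⌊L / s⌋₊ + 1) ^ 2 := by
  set n := ⌊L / s⌋₊ + 1
  -- indices of spread less than `n` are determined by their residues modulo `n`
  let f : Plane → Fin 2 → ZMod n := fun x i => latticeIndex s x i
  have hinj : InjOn f S := by
    intro x hx y hy hxy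
    ext i
    have hdvd : (n : ℤ) ∣ latticeIndex s y i - latticeIndex s x i :=
      (ZMod.intCast_eq_intCast_iff_dvd_sub _ _ _).1 (congrFun hxy i)
    have hidx : latticeIndex s x i = latticeIndex s y i := by
      have := Int.eq_zero_of_abs_lt_dvd hdvd
        (abs_sub_latticeIndex_lt hs (hS hy) (hS hx) (hdist y hy x hx) i)
      omega
    rw [eq_latticeIndex hs (hS hx), eq_latticeIndex hs (hS hy), hidx]
  calc S.ncard = (f '' S).ncard := hinj.ncard_image.symm
    _ ≤ Nat.card (Fin 2 → ZMod n) := ncard_le_card _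
    _ = n ^ 2 := by simp

theorem perimeter_ge_of_lattice_points_general (s : ℝ) (hs : 0 < s) (D : Set Plane)
    (hbd : Bornology.IsBounded D) (N : ℕ)
    (hpts : N ≤ (D ∩ latticePts s).ncard) (L : ℝ) (hL : 0 ≤ L) (γ : ℝ → Plane)
    (hγ : LipschitzOnWith 1 γ (Set.Icc 0 L)) (hfr : frontier D ⊆ γ '' Set.Icc 0 L) :
    s * (Real.sqrt (N : ℝ) - 1) ≤ L := by
  have hdist : ∀ x ∈ D ∩ latticePts s, ∀ y ∈ D ∩ latticePts s, dist x y ≤ L := by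
    intro x hx y hy
    obtain ⟨p, hp, q, hq, hpq⟩ := hbd.exists_dist_le_dist_frontier hx.1 hy.1
    simpa using hpq.trans (hγ.dist_le_of_mem_image_Icc (hfr hp) (hfr hq))
  have hN : (N : ℝ) ≤ (⌊L / s⌋₊ + 1) ^ 2 := by
    exact_mod_cast hpts.trans (ncard_le_of_subset_latticePts hs inter_subset_right hdist)
  have hsqrt : Real.sqrt N - 1 ≤ L / s := by
    rw [sub_le_iff_le_add, Real.sqrt_le_left (by positivity)]
    exact hN.trans (by gcongr; exact Nat.floor_le (by positivity))
  rwa [le_div_iff₀' hs] at hsqrt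

/-- **Perimeter lower bound.** If a bounded set `D ⊆ ℝ²` contains at least `N ≥ 1` points
of the square lattice of spacing `s > 0` and `frontier D` is covered by a curve
parametrized by a map that is `1`-Lipschitz on `[0, L]`, then `L ≥ s(√N − 1)`. -/
theorem perimeter_ge_of_lattice_points (s : ℝ) (hs : 0 < s) (D : Set Plane)
    (hbd : Bornology.IsBounded D) (N : ℕ) (hN : 1 ≤ N)
    (hpts : N ≤ (D ∩ latticePts s).ncard) (L : ℝ) (hL : 0 ≤ L) (γ : ℝ → Plane)
    (hγ : LipschitzOnWith 1 γ (Set.Icc 0 L)) (hfr : frontier D ⊆ γ '' Set.Icc 0 L) :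
    s * (Real.sqrt (N : ℝ) - 1) ≤ L :=
  perimeter_ge_of_lattice_points_general s hs D hbd N hpts L hL γ hγ hfr

end
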